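/- The q-Chebyshev polynomials of the second kind, defined by U_0 = 1, U_1 = (1+q)x, and U_n(x,s,q) = (1+q^n)·x·U_{n-1}(x,s,q) + q^{n-1}·s·U_{n-2}(x,s,q), satisfy the explicit formula U_n(x,s,q) = ∑_{k=0}^{⌊n/2⌋} q^{k²}·[n-k choose k]_q · (∏_{j=k+1}^{n-k}(1+q^j)) · s^k·x^{n-2k}. -/

import Mathlib

open Finset

noncomputable section

/-- The polynomial ring `ℤ[q,x,s]`. -/
abbrev R : Type := MvPolynomial (Fin 3) ℤ

def q : R := MvPolynomial.X 0
def x : R := MvPolynomial.X 1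
def s : R := MvPolynomial.X 2

/-- The Gaussian binomial coefficient `[n choose k]_q` as a polynomial in `q`,
via the Pascal recursion `[n+1, k+1] = [n, k+1] + q^(n-k) [n, k]`. -/
def gbinom : ℕ → ℕ → R
  | _, 0 => 1
  | 0, _ + 1 => 0
  | (n + 1), (k + 1) => gbinom n (k + 1) + q ^ (n - k) * gbinom n k

/-- q-Chebyshev polynomials of the second kind:
`U 0 = 1`, `U 1 = (1+q)x`, `U n = (1+q^n) x U (n-1) + q^(n-1) s U (n-2)`. -/
def chebU : ℕ → R
  | 0 => 1
  | 1 => (1 + q) * x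
  | (n + 2) => (1 + q ^ (n + 2)) * x * chebU (n + 1) + q ^ (n + 1) * s * chebU n

/-!
The summands `T n k` of the explicit formula satisfy the recurrence of `chebU` termwise:
`T (n+2) (k+1) = (1 + q^(n+2)) x T (n+1) (k+1) + q^(n+1) s T n k`. After cancelling the common
factors this is the identity
`(1 + q^(N+1)) [N+1, k+1] = (1 + q^(N+k+2)) [N, k+1] + q^(N-k) (1 + q^(k+1)) [N, k]`,
a combination of the two q-Pascal rules. Since `T n k = 0` for `2k > n`, the sum may be taken over
any range `k < m` with `n < 2m`, and summing the termwise recurrence gives the one for the sums.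
-/

lemma gbinom_zero_right (n : ℕ) : gbinom n 0 = 1 := by
  cases n <;> rfl

lemma gbinom_succ_succ (n k : ℕ) :
    gbinom (n + 1) (k + 1) = gbinom n (k + 1) + q ^ (n - k) * gbinom n k :=
  rfl

lemma gbinom_eq_zero_of_lt : ∀ {n k : ℕ}, n < k → gbinom n k = 0
  | 0, _ + 1, _ => rfl
  | n + 1, k + 1, h => by
    rw [gbinom_succ_succ, gbinom_eq_zero_of_lt (by omega : n < k + 1),
      gbinom_eq_zero_of_lt (by omega : n < k), mul_zero, add_zero]

lemma gbinom_succ_succ' : ∀ n k : ℕ,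
    gbinom (n + 1) (k + 1) = q ^ (k + 1) * gbinom n (k + 1) + gbinom n k
  | 0, k => by
    simp [gbinom_succ_succ, gbinom_eq_zero_of_lt (Nat.succ_pos k)]
  | n + 1, 0 => by
    have ih := gbinom_succ_succ' n 0
    simp only [gbinom_succ_succ, gbinom_zero_right, Nat.sub_zero] at ih ⊢
    linear_combination ih
  | n + 1, k + 1 => by
    have ih₁ := gbinom_succ_succ' n (k + 1)
    have ih₀ := gbinom_succ_succ' n k
    have h₂ := gbinom_succ_succ (n + 1) (k + 1)
    have h₁ := gbinom_succ_succ n (k + 1)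
    have h₀ := gbinom_succ_succ n k
    rw [Nat.add_sub_add_right] at h₂
    -- `q^(k+2) q^(n-k-1) = q^(n-k) q^(k+1)` unless `n ≤ k`, where `[n, k+1] = 0`
    have hpow : q ^ (k + 2) * q ^ (n - (k + 1)) * gbinom n (k + 1) =
        q ^ (n - k) * q ^ (k + 1) * gbinom n (k + 1) := by
      rcases lt_or_ge k n with hkn | hnk
      · rw [← pow_add, ← pow_add, show k + 2 + (n - (k + 1)) = n - k + (k + 1) by omega]
      · rw [gbinom_eq_zero_of_lt (by omega : n < k + 1), mul_zero, mul_zero]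
    linear_combination h₂ + ih₁ + q ^ (n - k) * ih₀ - q ^ (k + 2) * h₁ - h₀ - hpow

lemma one_add_q_pow_mul_gbinom (k d : ℕ) :
    (1 + q ^ (k + d + 1)) * gbinom (k + d + 1) (k + 1) =
      (1 + q ^ (2 * k + d + 2)) * gbinom (k + d) (k + 1) +
        q ^ d * (1 + q ^ (k + 1)) * gbinom (k + d) k := by
  have h₁ := gbinom_succ_succ (k + d) k
  have h₂ := gbinom_succ_succ' (k + d) k
  rw [Nat.add_sub_cancel_left] at h₁
  linear_combination h₁ + q ^ (k + d + 1) * h₂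

def chebUTerm (n k : ℕ) : R :=
  q ^ (k ^ 2) * gbinom (n - k) k * (∏ j ∈ Icc (k + 1) (n - k), (1 + q ^ j)) *
    s ^ k * x ^ (n - 2 * k)

lemma chebUTerm_eq_zero {n k : ℕ} (h : n < 2 * k) : chebUTerm n k = 0 := by
  simp [chebUTerm, gbinom_eq_zero_of_lt (by omega : n - k < k)]

lemma chebUTerm_two_mul_add (k d : ℕ) :
    chebUTerm (2 * k + d) k =
      q ^ (k ^ 2) * gbinom (k + d) k * (∏ j ∈ Icc (k + 1) (k + d), (1 + q ^ j)) *
        s ^ k * x ^ d := by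
  rw [chebUTerm, show 2 * k + d - k = k + d by omega, Nat.add_sub_cancel_left]

lemma chebUTerm_zero_zero : chebUTerm 0 0 = 1 := by
  simp [chebUTerm, gbinom_zero_right]

lemma chebUTerm_succ_zero (n : ℕ) :
    chebUTerm (n + 1) 0 = (1 + q ^ (n + 1)) * x * chebUTerm n 0 := by
  simp only [chebUTerm, gbinom_zero_right, mul_zero, Nat.sub_zero]
  rw [prod_Icc_succ_top (by omega)]
  ring

lemma chebUTerm_succ_succ_two_mul (k : ℕ) :
    chebUTerm (2 * k + 2) (k + 1) =
      (1 + q ^ (2 * k + 2)) * x * chebUTerm (2 * k + 1) (k + 1) +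
        q ^ (2 * k + 1) * s * chebUTerm (2 * k) k := by
  rw [chebUTerm_eq_zero (by omega : 2 * k + 1 < 2 * (k + 1)),
    show 2 * k + 2 = 2 * (k + 1) + 0 by ring, chebUTerm_two_mul_add,
    ← add_zero (2 * k), chebUTerm_two_mul_add]
  simp only [add_zero]
  rw [gbinom_succ_succ, Nat.sub_self, gbinom_eq_zero_of_lt (Nat.lt_succ_self k),
    Icc_eq_empty_of_lt (Nat.lt_succ_self k), Icc_eq_empty_of_lt (Nat.lt_succ_self (k + 1))]
  ring

lemma chebUTerm_succ_succ_of_lt {n k : ℕ} (h : 2 * k < n) :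
    chebUTerm (n + 2) (k + 1) =
      (1 + q ^ (n + 2)) * x * chebUTerm (n + 1) (k + 1) + q ^ (n + 1) * s * chebUTerm n k := by
  obtain ⟨d, rfl⟩ : ∃ d, n = 2 * k + (d + 1) := ⟨n - (2 * k + 1), by omega⟩
  have key := one_add_q_pow_mul_gbinom k (d + 1)
  rw [show k + (d + 1) = k + 1 + d by ring] at key
  rw [show 2 * k + (d + 1) + 2 = 2 * (k + 1) + (d + 1) by ring,
    show 2 * k + (d + 1) + 1 = 2 * (k + 1) + d by ring,
    chebUTerm_two_mul_add, chebUTerm_two_mul_add, chebUTerm_two_mul_add,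
    show k + 1 + (d + 1) = k + 1 + d + 1 by ring, show k + (d + 1) = k + 1 + d by ring,
    prod_Icc_succ_top (by omega : k + 1 + 1 ≤ k + 1 + d + 1),
    ← insert_Icc_add_one_left_eq_Icc (by omega : k + 1 ≤ k + 1 + d),
    prod_insert (by simp)]
  linear_combination q ^ ((k + 1) ^ 2) * (∏ j ∈ Icc (k + 1 + 1) (k + 1 + d), (1 + q ^ j)) *
    s ^ (k + 1) * x ^ (d + 1) * key

lemma chebUTerm_succ_succ (n k : ℕ) :
    chebUTerm (n + 2) (k + 1) =
      (1 + q ^ (n + 2)) * x * chebUTerm (n + 1) (k + 1) + q ^ (n + 1) * s * chebUTerm n k := by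
  rcases lt_trichotomy n (2 * k) with h | rfl | h
  · rw [chebUTerm_eq_zero h, chebUTerm_eq_zero (by omega : n + 2 < 2 * (k + 1)),
      chebUTerm_eq_zero (by omega : n + 1 < 2 * (k + 1))]
    ring
  · exact chebUTerm_succ_succ_two_mul k
  · exact chebUTerm_succ_succ_of_lt h

theorem chebU_eq_sum_range : ∀ {n m : ℕ}, n < 2 * m → chebU n = ∑ k ∈ range m, chebUTerm n k
  | _, 0, h => absurd h (by omega)
  | 0, m + 1, _ => by
    rw [sum_range_succ', sum_eq_zero fun k _ => chebUTerm_eq_zero (by omega),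
      chebUTerm_zero_zero, zero_add, chebU]
  | 1, m + 1, _ => by
    rw [sum_range_succ', sum_eq_zero fun k _ => chebUTerm_eq_zero (by omega),
      chebUTerm_succ_zero, chebUTerm_zero_zero, zero_add, chebU, pow_one, mul_one]
  | n + 2, m + 1, h => by
    rw [chebU, chebU_eq_sum_range (n := n + 1) (m := m + 1) (by omega),
      chebU_eq_sum_range (n := n) (m := m) (by omega), sum_range_succ' (chebUTerm (n + 2)),
      sum_range_succ' (chebUTerm (n + 1))]
    simp only [chebUTerm_succ_succ, chebUTerm_succ_zero, sum_add_distrib, ← mul_sum]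
    ring

theorem chebU_explicit (n : ℕ) :
    chebU n = ∑ k ∈ range (n / 2 + 1),
      q ^ (k ^ 2) * gbinom (n - k) k * (∏ j ∈ Icc (k + 1) (n - k), (1 + q ^ j)) *
        s ^ k * x ^ (n - 2 * k) :=
  chebU_eq_sum_range (by omega)

end
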